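/- arXiv:1007.3933 — 2 statements merged into one kernel-verified Lean document; each statement's English description precedes it below -/
import Mathlib

section
/- In a finite abelian group, any element of maximal order generates a cyclic subgroup that is a direct summand of the group. -/
/-! Let `n` be the exponent of `A`. Since characters of a subgroup of a finite abelian group
extend to the whole group, there is a character `χ : A →* ℂˣ` sending `g` to a primitive `n`-th
root of unity. It is injective on `⟨g⟩`, and every value of `χ` is an `n`-th root of unity,
hence lies in `χ ⟨g⟩`; so `ker χ` is a complement of `⟨g⟩`. -/

open Subgroup

theorem zpowers_inf_ker_eq_bot {G M : Type*} [Group G] [Group M] (φ : G →* M) {g : G}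
    (h : orderOf (φ g) = orderOf g) : zpowers g ⊓ φ.ker = ⊥ := by
  refine eq_bot_iff.mpr fun x hx ↦ ?_
  obtain ⟨hx, hker⟩ := mem_inf.mp hx
  obtain ⟨k, rfl⟩ := mem_zpowers_iff.mp hx
  rw [MonoidHom.mem_ker, map_zpow, ← orderOf_dvd_iff_zpow_eq_one, h,
    orderOf_dvd_iff_zpow_eq_one] at hker
  exact hker

theorem zpowers_sup_ker_eq_top {G M : Type*} [Group G] [Group M] (φ : G →* M) {g : G}
    (h : φ.range ≤ zpowers (φ g)) : zpowers g ⊔ φ.ker = ⊤ := by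
  rw [← top_sup_eq φ.ker, ← map_eq_map_iff, MonoidHom.map_zpowers, ← MonoidHom.range_eq_map]
  exact le_antisymm (zpowers_le.mpr ⟨g, rfl⟩) h

theorem mem_zpowers_mk_self {G : Type*} [Group G] (g : G) (x : zpowers g) :
    x ∈ zpowers (⟨g, mem_zpowers g⟩ : zpowers g) := by
  obtain ⟨_, k, rfl⟩ := x
  exact ⟨k, rfl⟩

theorem exists_monoidHom_units_apply_eq {G M : Type*} [CommGroup G] [Finite G] [CommMonoid M]
    [HasEnoughRootsOfUnity M (Monoid.exponent G)] {g : G} {ζ : Mˣ}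
    (hζ : orderOf ζ ∣ orderOf g) : ∃ χ : G →* Mˣ, χ g = ζ := by
  obtain ⟨χ, hχ⟩ := MonoidHom.domRestrict_surjective M (zpowers g)
    (monoidHomOfForallMemZpowers (mem_zpowers_mk_self g) (g' := ζ) (by rwa [orderOf_mk]))
  exact ⟨χ, by simpa using DFunLike.congr_fun hχ ⟨g, mem_zpowers g⟩⟩

theorem exists_monoidHom_orderOf_eq_range_le_zpowers {A : Type*} (M : Type*) [CommGroup A]
    [Finite A] [CommRing M] [IsDomain M] [HasEnoughRootsOfUnity M (Monoid.exponent A)] {g : A}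
    (hg : orderOf g = Monoid.exponent A) :
    ∃ χ : A →* Mˣ, orderOf (χ g) = orderOf g ∧ χ.range ≤ zpowers (χ g) := by
  have : NeZero (Monoid.exponent A) := ⟨Monoid.exponent_ne_zero_of_finite⟩
  obtain ⟨ζ, hζ⟩ := HasEnoughRootsOfUnity.exists_primitiveRoot M (Monoid.exponent A)
  replace hζ := hζ.isUnit_unit (NeZero.ne _)
  obtain ⟨χ, hχ⟩ := exists_monoidHom_units_apply_eq (g := g) (by rw [← hζ.eq_orderOf, hg])
  refine ⟨χ, by rw [hχ, ← hζ.eq_orderOf, hg], ?_⟩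
  rintro _ ⟨a, rfl⟩
  rw [hχ, hζ.zpowers_eq, mem_rootsOfUnity, ← map_pow, Monoid.pow_exponent_eq_one, map_one]

/-- In a finite abelian group, any element of maximal order (i.e. whose
order equals the exponent of the group) generates a cyclic subgroup that is a direct
summand of the group. -/
theorem stmt2 {A : Type*} [CommGroup A] [Finite A] (g : A)
    (hg : orderOf g = Monoid.exponent A) :
    ∃ H : Subgroup A, Subgroup.zpowers g ⊓ H = ⊥ ∧ Subgroup.zpowers g ⊔ H = ⊤ := by
  obtain ⟨χ, horder, hrange⟩ := exists_monoidHom_orderOf_eq_range_le_zpowers ℂ hg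
  exact ⟨χ.ker, zpowers_inf_ker_eq_bot χ horder, zpowers_sup_ker_eq_top χ hrange⟩
end

section
/- Let L/K be a Galois extension of fields of characteristic zero whose degree is a power of the prime l, with K not containing a primitive l-th root of unity, and let m be a power of l. Set L̃ = L(μ_m). Then the natural map K^×/(K^×)^m → L̃^×/(L̃^×)^m is injective. -/
/-!
Write `ω` for a primitive `l`-th root of unity in `Lt`. The degree of `ω` over `K` divides
`l - 1` and is not `1`, so `ω` does not lie in the `l`-extension `L`, and some `σ ∈ Gal(Lt/L)`
moves it. Let `b ^ l = a ∈ K`. For `g ∈ Gal(Lt/K)` the commutator `q = [σ, g]` acts trivially on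
the roots of unity, while `σ` is trivial on `L`; since these generate `Lt`, `σ` and `q`
commute, and evaluating on `b` forces `q b = b`. So `σ` commutes with all of `Gal(Lt/K)` on `b`,
which makes the Kummer cocycle `g ↦ g b / b` a coboundary: `w b ∈ K` for some `w ∈ μ_l`, and
`a = (w b) ^ l`. Exponents `l ^ n` follow by induction, using the roots of unity of order `l ^ n`.
-/

open Polynomial

namespace IsPrimitiveRoot

variable {K E : Type*} [Field K] [Field E] [Algebra K E]

theorem apply_apply_comm {m : ℕ} [NeZero m] {ζ : E} (hζ : IsPrimitiveRoot ζ m)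
    (g h : E ≃ₐ[K] E) {x : E} (hx : x ^ m = 1) : g (h x) = h (g x) := by
  have hpow : ∀ f : E ≃ₐ[K] E, ∃ i, f ζ = ζ ^ i := fun f ↦
    let ⟨i, _, hi⟩ := hζ.eq_pow_of_pow_eq_one (by rw [← map_pow, hζ.pow_eq_one, map_one])
    ⟨i, hi.symm⟩
  obtain ⟨i, -, rfl⟩ := hζ.eq_pow_of_pow_eq_one hx
  obtain ⟨j, hj⟩ := hpow g
  obtain ⟨k, hk⟩ := hpow h
  simp only [map_pow, hj, hk, pow_right_comm _ j k]

variable {l : ℕ} {ω : E} {σ : E ≃ₐ[K] E}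

theorem eq_one_of_apply_eq_self (hl : l.Prime) (hω : IsPrimitiveRoot ω l) (hσ : σ ω ≠ ω)
    {x : E} (hx : x ^ l = 1) (hσx : σ x = x) : x = 1 := by
  by_contra hx1
  have hxl : IsPrimitiveRoot x l :=
    isPrimitiveRoot_of_mem_nthRootsFinset hl ((Polynomial.mem_nthRootsFinset hl.pos 1).2 hx) hx1
  have : NeZero l := ⟨hl.ne_zero⟩
  obtain ⟨i, -, rfl⟩ := hxl.eq_pow_of_pow_eq_one hω.pow_eq_one
  exact hσ (by rw [map_pow, hσx])

theorem exists_div_apply_eq (hl : l.Prime) (hω : IsPrimitiveRoot ω l) (hσ : σ ω ≠ ω)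
    {y : E} (hy : y ^ l = 1) : ∃ w : E, w ^ l = 1 ∧ w / σ w = y := by
  set μ := nthRootsFinset l (1 : E)
  have hmem (x : E) : x ∈ μ ↔ x ^ l = 1 := Polynomial.mem_nthRootsFinset hl.pos 1
  have hne (x : E) (hx : x ^ l = 1) : x ≠ 0 := ne_zero_pow hl.ne_zero (hx ▸ one_ne_zero)
  have hmaps : Set.MapsTo (fun w ↦ w / σ w) μ μ := by
    intro w hw
    simp only [Finset.mem_coe, hmem] at hw ⊢
    rw [div_pow, ← map_pow, hw, map_one, div_one]
  have hinj : Set.InjOn (fun w ↦ w / σ w) μ := by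
    intro w hw v hv hwv
    simp only [Finset.mem_coe, hmem] at hw hv
    have hv0 := hne v hv
    have hσw := map_ne_zero σ |>.2 (hne w hw)
    have hσv := map_ne_zero σ |>.2 hv0
    have hfix : σ (w / v) = w / v := by
      rw [map_div₀]; field_simp at hwv ⊢; linear_combination -hwv
    exact (div_eq_one_iff_eq hv0).1
      (hω.eq_one_of_apply_eq_self hl hσ (by rw [div_pow, hw, hv, div_one]) hfix)
  obtain ⟨w, hw, hwy⟩ := Finset.surjOn_of_injOn_of_card_le _ hmaps hinj le_rfl ((hmem y).2 hy)
  exact ⟨w, (hmem w).1 hw, hwy⟩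

end IsPrimitiveRoot

section Kummer

variable {K E : Type*} [Field K] [Field E] [Algebra K E] {l : ℕ} {a : K} {b : E}

theorem AlgEquiv.apply_div_self_pow_eq_one (hb0 : b ≠ 0) (hb : b ^ l = algebraMap K E a)
    (f : E ≃ₐ[K] E) : (f b / b) ^ l = 1 := by
  rw [div_pow, ← map_pow, hb, AlgEquiv.commutes, div_self (hb ▸ pow_ne_zero l hb0)]

theorem exists_pow_eq_of_apply_apply_comm [FiniteDimensional K E] [IsGalois K E] (hl : l.Prime)
    {ω : E} (hω : IsPrimitiveRoot ω l) {σ : E ≃ₐ[K] E} (hσ : σ ω ≠ ω) (hb0 : b ≠ 0)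
    (hb : b ^ l = algebraMap K E a) (hcomm : ∀ g : E ≃ₐ[K] E, σ (g b) = g (σ b)) :
    ∃ c : K, c ^ l = a := by
  have : NeZero l := ⟨hl.ne_zero⟩
  obtain ⟨w, hw, hwσ⟩ := hω.exists_div_apply_eq hl hσ (σ.apply_div_self_pow_eq_one hb0 hb)
  have hw0 : w ≠ 0 := ne_zero_pow hl.ne_zero (hw ▸ one_ne_zero)
  have hfix (g : E ≃ₐ[K] E) : g (w * b) = w * b := by
    have hgb0 : g b ≠ 0 := (map_ne_zero g).2 hb0
    have hσw0 : σ w ≠ 0 := (map_ne_zero σ).2 hw0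
    have hgσw0 : g (σ w) ≠ 0 := (map_ne_zero g).2 hσw0
    have hσb : σ b = w * b / σ w := by
      rw [mul_div_right_comm, hwσ, div_mul_cancel₀ _ hb0]
    -- `v = 1` says exactly that `g` fixes `w * b`; `v` is an `l`-th root of unity fixed by `σ`.
    set v := g b / b * g w / w
    have hv : v ^ l = 1 := by
      rw [div_pow, mul_pow, g.apply_div_self_pow_eq_one hb0 hb, ← map_pow, hw, map_one]; simp
    have hσv : σ v = v := by
      simp only [v, map_div₀, map_mul, hcomm, hσb, hω.apply_apply_comm σ g hw]
      field_simp
    have hv1 := hω.eq_one_of_apply_eq_self hl hσ hv hσv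
    rw [map_mul]
    simp only [v] at hv1
    field_simp at hv1
    linear_combination hv1
  obtain ⟨c, hc⟩ := (IsGalois.mem_range_algebraMap_iff_fixed (w * b)).2 hfix
  refine ⟨c, (algebraMap K E).injective ?_⟩
  rw [map_pow, hc, mul_pow, hw, one_mul, hb]

end Kummer

/-- Injectivity of `K^× / (K^×)^m → E^× / (E^×)^m`. -/
def PowersDescend (K E : Type*) [Field K] [Field E] [Algebra K E] (m : ℕ) : Prop :=
  ∀ a : K, (∃ b : E, b ^ m = algebraMap K E a) → ∃ c : K, c ^ m = a

section PowersDescend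

variable {K E : Type*} [Field K] [Field E] [Algebra K E]

theorem powersDescend_one : PowersDescend K E 1 :=
  fun a _ ↦ ⟨a, pow_one a⟩

theorem PowersDescend.mul {p q : ℕ} [NeZero (p * q)] (hp : PowersDescend K E p)
    (hq : PowersDescend K E q) {ζ : E} (hζ : IsPrimitiveRoot ζ (p * q)) :
    PowersDescend K E (p * q) := by
  have hp0 : p ≠ 0 := left_ne_zero_of_mul (NeZero.ne (p * q))
  have : NeZero p := ⟨hp0⟩
  rintro a ⟨b, hb⟩
  obtain ⟨c, rfl⟩ := hp a ⟨b ^ q, by rw [← pow_mul, mul_comm, hb]⟩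
  rcases eq_or_ne c 0 with rfl | hc0
  · exact ⟨0, by rw [zero_pow (NeZero.ne _), zero_pow hp0]⟩
  have hc0' : algebraMap K E c ≠ 0 := (_root_.map_ne_zero _).2 hc0
  -- `b ^ q / c` is a `p`-th root of unity, hence the `q`-th power of a power of `ζ`.
  have hζq : IsPrimitiveRoot (ζ ^ q) p := hζ.pow (NeZero.pos _) (mul_comm p q)
  obtain ⟨i, -, hi⟩ := hζq.eq_pow_of_pow_eq_one (ξ := b ^ q / algebraMap K E c)
    (by rw [div_pow, ← pow_mul, mul_comm q p, hb, map_pow, div_self (pow_ne_zero p hc0')])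
  have hbq : b ^ q ≠ 0 := ne_zero_pow hp0 <| by
    rw [← pow_mul, mul_comm, hb, map_pow]; exact pow_ne_zero p hc0'
  obtain ⟨d, rfl⟩ := hq c ⟨b / ζ ^ i, by
    rw [div_pow, ← pow_mul, mul_comm i q, pow_mul, hi]; field_simp⟩
  exact ⟨d, by rw [pow_mul, pow_right_comm]⟩

theorem PowersDescend.pow {l : ℕ} [NeZero l] (h : PowersDescend K E l) :
    ∀ {n : ℕ} {ζ : E}, IsPrimitiveRoot ζ (l ^ n) → PowersDescend K E (l ^ n)
  | 0, _, _ => by rw [pow_zero]; exact powersDescend_one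
  | n + 1, ζ, hζ => by
    rw [pow_succ'] at hζ ⊢
    exact h.mul (PowersDescend.pow h (hζ.pow (NeZero.pos _) rfl)) hζ

end PowersDescend

theorem exists_isPrimitiveRoot_of_finrank_eq_prime_pow {K L : Type*} [Field K] [Field L]
    [Algebra K L] [FiniteDimensional K L] {l k : ℕ} (hl : l.Prime)
    (hdeg : Module.finrank K L = l ^ k) {ζ : L} (hζ : IsPrimitiveRoot ζ l) :
    ∃ ζ' : K, IsPrimitiveRoot ζ' l := by
  have hroot : aeval ζ (cyclotomic l K) = 0 := by
    rw [aeval_def, eval₂_eq_eval_map, map_cyclotomic]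
    exact hζ.isRoot_cyclotomic hl.pos
  have hle : (minpoly K ζ).natDegree < l := by
    have := natDegree_le_of_dvd (minpoly.dvd K ζ hroot) (cyclotomic_ne_zero l K)
    rw [natDegree_cyclotomic, Nat.totient_prime hl] at this
    have := hl.one_lt
    omega
  obtain ⟨j, -, hj⟩ := (Nat.dvd_prime_pow hl).1
    (hdeg ▸ minpoly.degree_dvd (Algebra.IsIntegral.isIntegral ζ))
  have hj0 : j = 0 := by
    by_contra hj0
    exact absurd (hj ▸ hle) (not_lt.2 (Nat.le_self_pow hj0 l))
  obtain ⟨c, rfl⟩ := minpoly.natDegree_eq_one_iff.1 (by rw [hj, hj0, pow_zero])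
  exact ⟨c, hζ.of_map_of_injective (algebraMap K L).injective⟩

section AdjoinRootsOfUnity

variable {K L Lt : Type*} [Field K] [Field L] [Field Lt] [Algebra K L] [Algebra L Lt]
  [Algebra K Lt] [IsScalarTower K L Lt]

theorem apply_apply_comm_of_adjoin_eq_top [Normal K L] {m : ℕ}
    (hadj : Algebra.adjoin L {x : Lt | x ^ m = 1} = ⊤) {τ q : Lt ≃ₐ[K] Lt}
    (hτ : ∀ x : L, τ (algebraMap L Lt x) = algebraMap L Lt x)
    (hq : ∀ x : Lt, x ^ m = 1 → q x = x) (x : Lt) : τ (q x) = q (τ x) := by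
  have hx : x ∈ Algebra.adjoin L {x : Lt | x ^ m = 1} := hadj ▸ Algebra.mem_top
  induction hx using Algebra.adjoin_induction with
  | mem y hy =>
    rw [hq y hy, hq (τ y) (by rw [← map_pow, Set.mem_ofPred.1 hy, map_one])]
  | algebraMap r => rw [hτ, ← AlgEquiv.restrictNormal_commutes q L r, hτ]
  | add x y _ _ hx hy => rw [map_add, map_add, hx, hy, map_add, map_add]
  | mul x y _ _ hx hy => rw [map_mul, map_mul, hx, hy, map_mul, map_mul]

theorem apply_apply_comm_of_fixes [Normal K L] {l m : ℕ} (hl : l.Prime)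
    (hadj : Algebra.adjoin L {x : Lt | x ^ m = 1} = ⊤) [NeZero m] {ζ : Lt}
    (hζ : IsPrimitiveRoot ζ m) (hlm : l ∣ m) {ω : Lt} (hω : IsPrimitiveRoot ω l)
    {σ : Lt ≃ₐ[K] Lt} (hσL : ∀ x : L, σ (algebraMap L Lt x) = algebraMap L Lt x)
    (hσ : σ ω ≠ ω) {a : K} {b : Lt} (hb0 : b ≠ 0) (hb : b ^ l = algebraMap K Lt a)
    (g : Lt ≃ₐ[K] Lt) : σ (g b) = g (σ b) := by
  have hpow_m {x : Lt} (hx : x ^ l = 1) : x ^ m = 1 := by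
    obtain ⟨d, rfl⟩ := hlm; rw [pow_mul, hx, one_pow]
  set q := σ⁻¹ * g⁻¹ * σ * g with hqdef
  have hq (x : Lt) (hx : x ^ m = 1) : q x = x := by
    simp only [hqdef, AlgEquiv.mul_apply, hζ.apply_apply_comm σ g hx, AlgEquiv.aut_inv,
      AlgEquiv.symm_apply_apply]
  set u := q b / b
  set v := σ b / b
  have hu : u ^ l = 1 := q.apply_div_self_pow_eq_one hb0 hb
  have hv : v ^ l = 1 := σ.apply_div_self_pow_eq_one hb0 hb
  have hqb : q b = u * b := by simp [u, hb0]
  have hσb : σ b = v * b := by simp [v, hb0]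
  have hv0 : v ≠ 0 := ne_zero_pow hl.ne_zero (hv ▸ one_ne_zero)
  have hσu : σ u = u := by
    have h := apply_apply_comm_of_adjoin_eq_top hadj hσL hq b
    rw [hqb, map_mul, hσb, map_mul, hq v (hpow_m hv), hqb] at h
    exact mul_right_cancel₀ (mul_ne_zero hv0 hb0) (h.trans (by ring))
  have hqb1 : q b = b := by
    rw [hqb, hω.eq_one_of_apply_eq_self hl hσ hu hσu, one_mul]
  have h := congrArg (fun x ↦ g (σ x)) hqb1
  simpa [hqdef, AlgEquiv.aut_inv] using h

theorem powersDescend_of_fixes [Normal K L] [FiniteDimensional K Lt] [IsGalois K Lt] {l m : ℕ}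
    [NeZero m] (hl : l.Prime)
    (hadj : Algebra.adjoin L {x : Lt | x ^ m = 1} = ⊤) {ζ : Lt} (hζ : IsPrimitiveRoot ζ m)
    (hlm : l ∣ m) {ω : Lt} (hω : IsPrimitiveRoot ω l) {σ : Lt ≃ₐ[K] Lt}
    (hσL : ∀ x : L, σ (algebraMap L Lt x) = algebraMap L Lt x) (hσ : σ ω ≠ ω) :
    PowersDescend K Lt l := by
  rintro a ⟨b, hb⟩
  rcases eq_or_ne b 0 with rfl | hb0
  · refine ⟨0, (algebraMap K Lt).injective ?_⟩
    rw [← hb, map_pow, map_zero]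
  exact exists_pow_eq_of_apply_apply_comm hl hω hσ hb0 hb
    (apply_apply_comm_of_fixes hl hadj hζ hlm hω hσL hσ hb0 hb)

theorem exists_isSplittingField_of_adjoin_eq_top [IsGalois K L] [FiniteDimensional K L] {m : ℕ}
    [NeZero m] {ζ : Lt} (hζ : IsPrimitiveRoot ζ m)
    (hadj : Algebra.adjoin L {x : Lt | x ^ m = 1} = ⊤) :
    ∃ p : K[X], IsSplittingField K Lt p := by
  obtain ⟨p, hpsep, hp⟩ := IsGalois.is_separable_splitting_field K L
  have : IsCyclotomicExtension {m} L Lt :=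
    (IsCyclotomicExtension.iff_adjoin_eq_top {m} L Lt).2
      ⟨fun n hn _ ↦ ⟨ζ, Set.mem_singleton_iff.1 hn ▸ hζ⟩, by simpa [NeZero.ne m] using hadj⟩
  have : IsSplittingField L Lt ((X ^ m - C 1 : K[X]).map (algebraMap K L)) := by
    simpa using IsCyclotomicExtension.isSplittingField_X_pow_sub_one m L Lt
  exact ⟨_, IsSplittingField.mul (K := L) Lt p _ hpsep.ne_zero
    (X_pow_sub_C_ne_zero (NeZero.pos m) 1)⟩

theorem exists_algEquiv_fixing_apply_ne [FiniteDimensional K Lt] [IsGalois K Lt] {l : ℕ}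
    {ω : Lt} (hω : IsPrimitiveRoot ω l) (hωL : ¬∃ ζ : L, IsPrimitiveRoot ζ l) :
    ∃ σ : Lt ≃ₐ[K] Lt, (∀ x : L, σ (algebraMap L Lt x) = algebraMap L Lt x) ∧ σ ω ≠ ω := by
  have : IsGalois L Lt := IsGalois.tower_top_of_isGalois K L Lt
  have : FiniteDimensional L Lt := Module.Finite.of_restrictScalars_finite K L Lt
  by_contra! h
  obtain ⟨y, rfl⟩ := (IsGalois.mem_range_algebraMap_iff_fixed (F := L) ω).2 fun f ↦
    h (f.restrictScalars K) f.commutes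
  exact hωL ⟨y, hω.of_map_of_injective (algebraMap L Lt).injective⟩

end AdjoinRootsOfUnity

theorem stmt7_general {K L Lt : Type*} [Field K] [CharZero K] [Field L] [Field Lt]
    [Algebra K L] [Algebra L Lt] [Algebra K Lt] [IsScalarTower K L Lt]
    {l : ℕ} (hl : l.Prime)
    [IsGalois K L] [FiniteDimensional K L] {k : ℕ}
    (hdeg : Module.finrank K L = l ^ k)
    (hζK : ¬∃ ζ : K, IsPrimitiveRoot ζ l)
    {m : ℕ} {n : ℕ} (hm : m = l ^ n)
    (hμ : ∃ ζ : Lt, IsPrimitiveRoot ζ m)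
    (hadj : Algebra.adjoin L {x : Lt | x ^ m = 1} = ⊤)
    (a : K) (hb : ∃ b : Lt, b ^ m = algebraMap K Lt a) :
    ∃ c : K, c ^ m = a := by
  subst hm
  obtain ⟨ζ, hζ⟩ := hμ
  have : NeZero l := ⟨hl.ne_zero⟩
  obtain ⟨p, hp⟩ := exists_isSplittingField_of_adjoin_eq_top (K := K) hζ hadj
  have : FiniteDimensional K Lt := IsSplittingField.finiteDimensional Lt p
  have : Normal K Lt := Normal.of_isSplittingField p
  have : IsGalois K Lt := { }
  rcases n with _ | n
  · exact powersDescend_one a hb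
  have hω : IsPrimitiveRoot (ζ ^ l ^ n) l := hζ.pow (NeZero.pos _) (pow_succ l n)
  obtain ⟨σ, hσL, hσ⟩ := exists_algEquiv_fixing_apply_ne (K := K) hω fun ⟨ζ, hζ⟩ ↦
    hζK (exists_isPrimitiveRoot_of_finrank_eq_prime_pow (K := K) hl hdeg hζ)
  have hdescend := powersDescend_of_fixes hl hadj hζ (dvd_pow_self l n.succ_ne_zero) hω hσL hσ
  exact hdescend.pow hζ a hb

/-- Let `L/K` be a Galois extension of characteristic-zero fields of
`l`-power degree with `ζ_l ∉ K`, `m` a power of `l`, and `Lt = L(μ_m)`.  Then the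
natural map `K^×/(K^×)^m → Lt^×/(Lt^×)^m` is injective: a nonzero element of `K` that
becomes an `m`-th power in `Lt` is already an `m`-th power in `K`. -/
theorem stmt7 {K L Lt : Type*} [Field K] [CharZero K] [Field L] [Field Lt]
    [Algebra K L] [Algebra L Lt] [Algebra K Lt] [IsScalarTower K L Lt]
    {l : ℕ} (hl : l.Prime)
    [IsGalois K L] [FiniteDimensional K L] {k : ℕ}
    (hdeg : Module.finrank K L = l ^ k)
    (hζK : ¬∃ ζ : K, IsPrimitiveRoot ζ l)
    {m : ℕ} {n : ℕ} (hm : m = l ^ n)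
    (hμ : ∃ ζ : Lt, IsPrimitiveRoot ζ m)
    (hadj : Algebra.adjoin L {x : Lt | x ^ m = 1} = ⊤)
    (a : K) (ha : a ≠ 0) (hb : ∃ b : Lt, b ^ m = algebraMap K Lt a) :
    ∃ c : K, c ^ m = a :=
  stmt7_general hl hdeg hζK hm hμ hadj a hb
end
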